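/- arXiv:1108.3861 — 2 statements merged into one kernel-verified Lean document; each statement's English description precedes it below -/
import Mathlib

section
/- Let r be fixed and y = (1/2) log h. For distinct integers 0 ≤ h₁,…,h_r ≤ h, the partial product ∏_{p > y} (1 - ν_p(h)/p)(1 - 1/p)^{-r} equals 1 + O(1/log log h), uniformly in the tuple. -/
open Finset

noncomputable def nu (p : ℕ) {r : ℕ} (a : Fin r → ℤ) : ℕ :=
  (Finset.univ.image (fun i => ((a i : ZMod p)))).card

/-!
Write the factor at `p` as `1 + δ_p`. Since `|∏ (1 + δ_p) - 1| ≤ exp (∑ |δ_p|) - 1`, it suffices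
to show `∑_{p > y} |δ_p| ≪ 1 / log log h`. Let `H = ∏_{i ≠ j} (hᵢ - hⱼ)`. For `p ∤ H` we have
`ν_p = r` and `|δ_p| ≤ r² / p²`, whose tail over `p > y` is `≪ y^{-1/2}`. The primes `p > y`
dividing `H` number at most `log |H| / log y ≤ r² log h / log y`, and each has
`|δ_p| ≤ 2r / p < 4r / log h`. Primes `p < 2r` exceed `y` only when `log h < 4r`, that is, when
`log log h` is bounded in terms of `r`.
-/

lemma norm_tprod_one_add_sub_one_le {ι R : Type*} [NormedCommRing R] [NormOneClass R]
    [CompleteSpace R] {f : ι → R} (hf : Summable fun i ↦ ‖f i‖) :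
    ‖∏' i, (1 + f i) - 1‖ ≤ Real.exp (∑' i, ‖f i‖) - 1 := by
  have hlim := ((multipliable_one_add_of_summable hf).hasProd.sub_const 1).norm
  refine le_of_tendsto' hlim fun t ↦ (t.norm_prod_one_add_sub_one_le f).trans ?_
  gcongr
  exact hf.sum_le_tsum t fun i _ ↦ norm_nonneg _

lemma exp_sub_one_le_mul_exp (x : ℝ) : Real.exp x - 1 ≤ x * Real.exp x := by
  have h := mul_le_mul_of_nonneg_right (Real.add_one_le_exp (-x)) (Real.exp_pos x).le
  rw [← Real.exp_add, neg_add_cancel, Real.exp_zero] at h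
  linarith

lemma hasSum_indicator_const {β : Type*} (s : Finset β) (c : ℝ) :
    HasSum ((s : Set β).indicator fun _ ↦ c) (#s * c) := by
  have h : HasSum ((s : Set β).indicator fun _ ↦ c)
      (∑ n ∈ s, (s : Set β).indicator (fun _ ↦ c) n) :=
    hasSum_sum_of_ne_finset_zero fun n hn ↦ Set.indicator_of_notMem (by simpa using hn) _
  rwa [sum_indicator_subset _ subset_rfl, sum_const, nsmul_eq_mul] at h

noncomputable def singularFactor (q ν : ℝ) (r : ℕ) : ℝ := (1 - ν / q) * ((1 - 1 / q)⁻¹) ^ r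

section singularFactor

variable {q ν : ℝ} {r : ℕ}

lemma one_le_inv_one_sub_inv (hq : 1 < q) : 1 ≤ (1 - 1 / q)⁻¹ := by
  have : 0 < 1 / q := by positivity
  have : 1 / q < 1 := by rw [div_lt_one (by linarith)]; exact hq
  exact one_le_inv_iff₀.mpr ⟨by linarith, by linarith⟩

lemma one_sub_div_le_one_sub_inv_pow (hq : 1 ≤ q) (r : ℕ) : 1 - r / q ≤ (1 - 1 / q) ^ r := by
  have : 1 / q ≤ 1 := by rw [div_le_one (by linarith)]; exact hq
  calc 1 - r / q = 1 + r * -(1 / q) := by ring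
    _ ≤ (1 + -(1 / q)) ^ r := one_add_mul_le_pow (by linarith) r
    _ = (1 - 1 / q) ^ r := by rw [← sub_eq_add_neg]

lemma abs_singularFactor_sub_one_le_two_pow (hq : 2 ≤ q) (hν : 0 ≤ ν) (hνq : ν ≤ q) :
    |singularFactor q ν r - 1| ≤ 2 ^ r := by
  have h0 : 0 ≤ 1 - ν / q := by rw [sub_nonneg, div_le_one (by linarith)]; exact hνq
  have h1 : 1 - ν / q ≤ 1 := by linarith [div_nonneg hν (by linarith : 0 ≤ q)]
  have hw : (1 - 1 / q)⁻¹ ≤ 2 := by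
    rw [inv_le_comm₀ (by rw [sub_pos, div_lt_one (by linarith)]; linarith) (by norm_num),
      le_sub_comm, div_le_iff₀ (by linarith)]
    linarith
  have hw1 := one_le_inv_one_sub_inv (by linarith : 1 < q)
  have hF0 : 0 ≤ singularFactor q ν r := mul_nonneg h0 (pow_nonneg (by linarith) r)
  have hF : singularFactor q ν r ≤ 2 ^ r :=
    (mul_le_of_le_one_left (pow_nonneg (by linarith) r) h1).trans
      (pow_le_pow_left₀ (by linarith) hw r)
  have hone : (1 : ℝ) ≤ 2 ^ r := one_le_pow₀ (by norm_num)
  rw [abs_le]; constructor <;> linarith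

lemma abs_singularFactor_sub_one_le_of_le (hq : 2 ≤ q) (hrq : 2 * r ≤ q) (hν : 0 ≤ ν)
    (hνr : ν ≤ r) : |singularFactor q ν r - 1| ≤ 2 * r / q := by
  have hq0 : 0 < q := by linarith
  rw [mul_div_assoc]
  set t : ℝ := r / q
  have ht0 : 0 ≤ t := by positivity
  have ht : t ≤ 1 / 2 := by rw [div_le_iff₀ hq0]; linarith
  have hνq : ν / q ≤ t := div_le_div_of_nonneg_right hνr hq0.le
  have hν0 : 0 ≤ ν / q := by positivity
  have hw : ((1 - 1 / q)⁻¹) ^ r ≤ (1 - t)⁻¹ := by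
    rw [inv_pow]
    exact inv_anti₀ (by linarith) (one_sub_div_le_one_sub_inv_pow (by linarith) r)
  have hw' : (1 - t)⁻¹ ≤ 1 + 2 * t := by
    rw [inv_le_iff_one_le_mul₀ (by linarith)]
    nlinarith [mul_nonneg ht0 (by linarith : 0 ≤ 1 / 2 - t)]
  have hw1 := one_le_inv_one_sub_inv (by linarith : 1 < q)
  have hlow : 1 - ν / q ≤ singularFactor q ν r :=
    le_mul_of_one_le_right (by linarith) (one_le_pow₀ hw1)
  have hup : singularFactor q ν r ≤ ((1 - 1 / q)⁻¹) ^ r :=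
    mul_le_of_le_one_left (pow_nonneg (by linarith) r) (by linarith)
  rw [abs_le]; constructor <;> linarith

/-- The two factors cancel to first order: `(1 - r/q)(1 + r/q) ≤ F ≤ 1`. -/
lemma abs_singularFactor_self_sub_one_le (hq : 2 ≤ q) (hrq : r ≤ q) :
    |singularFactor q r r - 1| ≤ r ^ 2 / q ^ 2 := by
  have hq0 : 0 < q := by linarith
  have hu : 1 / q < 1 := by rw [div_lt_one hq0]; linarith
  have hu0 : 0 < 1 / q := by positivity
  have hrq' : 0 ≤ 1 - r / q := by rw [sub_nonneg, div_le_one hq0]; exact hrq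
  have hup : singularFactor q r r ≤ 1 := by
    rw [singularFactor, inv_pow, ← div_eq_mul_inv, div_le_one (pow_pos (by linarith) r)]
    exact one_sub_div_le_one_sub_inv_pow (by linarith) r
  have hw : 1 + 1 / q ≤ (1 - 1 / q)⁻¹ := by
    rw [le_inv_comm₀ (by positivity) (by linarith), inv_eq_one_div, le_div_iff₀ (by positivity)]
    nlinarith
  have hw' : 1 + r / q ≤ ((1 - 1 / q)⁻¹) ^ r :=
    calc 1 + r / q = 1 + r * (1 / q) := by ring
      _ ≤ (1 + 1 / q) ^ r := one_add_mul_le_pow (by linarith) r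
      _ ≤ _ := pow_le_pow_left₀ (by linarith) hw r
  have hlow : (1 - r / q) * (1 + r / q) ≤ singularFactor q r r :=
    mul_le_mul_of_nonneg_left hw' hrq'
  have : (1 - r / q) * (1 + r / q) = 1 - r ^ 2 / q ^ 2 := by field_simp; ring
  rw [abs_le]; constructor <;> nlinarith [div_nonneg (sq_nonneg (r : ℝ)) (sq_nonneg q)]

end singularFactor

section nu

variable {r : ℕ} (a : Fin r → ℤ)

lemma nu_le (p : ℕ) : nu p a ≤ r := card_image_le.trans (by simp)

lemma nu_le_self (p : ℕ) [NeZero p] : nu p a ≤ p := (card_le_univ _).trans (ZMod.card p).le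

/-- Up to sign, the square of `∏_{i < j} (a i - a j)`. -/
def diffProduct : ℤ := ∏ ij ∈ (univ : Finset (Fin r)).offDiag, (a ij.1 - a ij.2)

variable {a}

lemma diffProduct_ne_zero (ha : Function.Injective a) : diffProduct a ≠ 0 :=
  prod_ne_zero_iff.mpr fun _ hij ↦ sub_ne_zero.mpr (ha.ne (mem_offDiag.mp hij).2.2)

lemma nu_eq_of_not_dvd {p : ℕ} (hp : ¬ (p : ℤ) ∣ diffProduct a) : nu p a = r := by
  have hinj : Function.Injective fun i ↦ (a i : ZMod p) := by
    intro i j hij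
    by_contra hne
    have hij' : (i, j) ∈ (univ : Finset (Fin r)).offDiag := by simpa using hne
    exact hp ((ZMod.intCast_eq_intCast_iff_dvd_sub _ _ _).mp hij.symm |>.trans
      (dvd_prod_of_mem (fun ij ↦ a ij.1 - a ij.2) hij'))
  rw [nu, card_image_of_injective _ hinj, card_univ, Fintype.card_fin]

lemma abs_diffProduct_le {h : ℕ} (hh : 1 ≤ h) (ha : ∀ i, a i ∈ Icc (0 : ℤ) h) :
    |diffProduct a| ≤ (h : ℤ) ^ (r ^ 2) := by
  have hdiff : ∀ ij ∈ (univ : Finset (Fin r)).offDiag, |a ij.1 - a ij.2| ≤ h := fun ij _ ↦ by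
    have := mem_Icc.mp (ha ij.1)
    have := mem_Icc.mp (ha ij.2)
    rw [abs_le]; constructor <;> linarith
  calc |diffProduct a| = ∏ ij ∈ (univ : Finset (Fin r)).offDiag, |a ij.1 - a ij.2| :=
        abs_prod _ _
    _ ≤ ∏ _ij ∈ (univ : Finset (Fin r)).offDiag, (h : ℤ) :=
        prod_le_prod (fun _ _ ↦ abs_nonneg _) hdiff
    _ = (h : ℤ) ^ (univ : Finset (Fin r)).offDiag.card := prod_const _
    _ ≤ (h : ℤ) ^ (r ^ 2) := by
        gcongr
        · exact_mod_cast hh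
        · simp [offDiag_card, sq]

lemma log_natAbs_diffProduct_le {h : ℕ} (hh : 1 ≤ h) (ha : ∀ i, a i ∈ Icc (0 : ℤ) h) :
    Real.log (diffProduct a).natAbs ≤ r ^ 2 * Real.log h := by
  have hD : ((diffProduct a).natAbs : ℝ) ≤ (h : ℝ) ^ (r ^ 2) := by
    have := abs_diffProduct_le hh ha
    rw [Int.abs_eq_natAbs] at this
    exact_mod_cast this
  rcases Nat.eq_zero_or_pos (diffProduct a).natAbs with h0 | hpos
  · rw [h0, Nat.cast_zero, Real.log_zero]
    exact mul_nonneg (by positivity) (Real.log_natCast_nonneg h)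
  · calc Real.log (diffProduct a).natAbs ≤ Real.log ((h : ℝ) ^ (r ^ 2)) :=
          Real.log_le_log (by exact_mod_cast hpos) hD
      _ = r ^ 2 * Real.log h := by rw [Real.log_pow]; push_cast; ring

end nu

noncomputable def largePrimeFactors (n : ℕ) (y : ℝ) : Finset ℕ :=
  n.primeFactors.filter fun p : ℕ ↦ y < p

lemma card_largePrimeFactors_mul_log_le {n : ℕ} (hn : n ≠ 0) {y : ℝ} (hy : 0 < y) :
    #(largePrimeFactors n y) * Real.log y ≤ Real.log n := by
  set P := largePrimeFactors n y
  have hprod : y ^ #P ≤ ((∏ p ∈ P, p : ℕ) : ℝ) := by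
    rw [Nat.cast_prod, ← prod_const]
    exact prod_le_prod (fun _ _ ↦ hy.le) fun p hp ↦ (mem_filter.mp hp).2.le
  have hdvd : ∏ p ∈ P, p ≤ n := Nat.le_of_dvd (Nat.pos_of_ne_zero hn)
    ((prod_dvd_prod_of_subset _ _ _ (filter_subset _ _)).trans (Nat.prod_primeFactors_dvd n))
  rw [← Real.log_pow]
  exact Real.log_le_log (by positivity) (hprod.trans (by exact_mod_cast hdvd))

lemma rpow_neg_three_halves_eq {q : ℝ} (hq : 0 ≤ q) : q ^ (-(3 / 2) : ℝ) = (q ^ 2)⁻¹ * √q := by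
  rcases hq.eq_or_lt with rfl | hq
  · simp
  rw [Real.sqrt_eq_rpow, ← Real.rpow_natCast, ← Real.rpow_neg hq.le, ← Real.rpow_add hq]
  norm_num

lemma inv_sq_le_inv_sqrt_mul_rpow {y q : ℝ} (hy : 0 < y) (hyq : y ≤ q) :
    (q ^ 2)⁻¹ ≤ (√y)⁻¹ * q ^ (-(3 / 2) : ℝ) := by
  rw [rpow_neg_three_halves_eq (hy.trans_le hyq).le, mul_left_comm]
  refine le_mul_of_one_le_right (by positivity) ?_
  rw [inv_mul_eq_div, one_le_div (Real.sqrt_pos.mpr hy)]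
  exact Real.sqrt_le_sqrt hyq

lemma exp_one_le_log_of_sixteen_le {x : ℝ} (hx : 16 ≤ x) : Real.exp 1 ≤ Real.log x := by
  have h16 : Real.log 16 = 4 * Real.log 2 := by
    rw [show (16 : ℝ) = 2 ^ 4 by norm_num, Real.log_pow]; norm_num
  have := Real.log_le_log (by norm_num) hx
  linarith [Real.log_two_gt_d9, Real.exp_one_lt_d9]

lemma log_le_four_mul_log_half {x : ℝ} (hx : Real.exp 1 ≤ x) :
    Real.log x ≤ 4 * Real.log (x / 2) := by
  have hx0 : 0 < x := (Real.exp_pos 1).trans_le hx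
  have hx3 : (2 : ℝ) ^ 4 ≤ x ^ 3 :=
    calc (2 : ℝ) ^ 4 ≤ 2.7 ^ 3 := by norm_num
      _ ≤ x ^ 3 := pow_le_pow_left₀ (by norm_num) (by linarith [Real.exp_one_gt_d9]) 3
  have h := Real.log_le_log (by norm_num) hx3
  rw [Real.log_pow, Real.log_pow] at h
  rw [Real.log_div hx0.ne' two_ne_zero]
  push_cast at h
  linarith

lemma log_le_four_mul_sqrt_half {x : ℝ} (hx : 0 ≤ x) : Real.log x ≤ 4 * √(x / 2) := by
  have h := Real.log_le_rpow_div hx (by norm_num : (0 : ℝ) < 1 / 2)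
  rw [← Real.sqrt_eq_rpow] at h
  have : √x ≤ 2 * √(x / 2) :=
    calc √x ≤ √(2 ^ 2 * (x / 2)) := Real.sqrt_le_sqrt (by linarith)
      _ = 2 * √(x / 2) := by rw [Real.sqrt_mul (by norm_num), Real.sqrt_sq (by norm_num)]
  linarith

lemma log_four_mul_nonneg (r : ℕ) : 0 ≤ Real.log (4 * r) := by
  exact_mod_cast Real.log_natCast_nonneg (4 * r)

/-- Majorant of `|δ_p|` at primes `p > y`: `c` covers the primes `p < 2r`, `2r/y ≥ 2r/p` the
prime factors of `H`, and `y^{-1/2} p^{-3/2} ≥ p^{-2}` the remaining primes. -/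
noncomputable def tailMajorant (r H : ℕ) (y c : ℝ) (n : ℕ) : ℝ :=
  (↑(range (2 * r)) : Set ℕ).indicator (fun _ ↦ c) n
    + (↑(largePrimeFactors H y) : Set ℕ).indicator (fun _ ↦ 2 * r / y) n
    + r ^ 2 / √y * (n : ℝ) ^ (-(3 / 2) : ℝ)

lemma hasSum_tailMajorant (r H : ℕ) (y c : ℝ) :
    HasSum (tailMajorant r H y c) (2 * r * c + #(largePrimeFactors H y) * (2 * r / y)
      + r ^ 2 / √y * ∑' n : ℕ, (n : ℝ) ^ (-(3 / 2) : ℝ)) := by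
  have hζ := (Real.summable_nat_rpow.mpr (by norm_num : -(3 / 2 : ℝ) < -1)).hasSum
  convert ((hasSum_indicator_const (range (2 * r)) c).add
    (hasSum_indicator_const (largePrimeFactors H y) (2 * r / y))).add
    (hζ.mul_left (r ^ 2 / √y)) using 1
  · rfl
  · simp [card_range]

lemma tailMajorant_nonneg {r H : ℕ} {y c : ℝ} (hy : 0 < y) (hc : 0 ≤ c) (n : ℕ) :
    0 ≤ tailMajorant r H y c n := by
  have h1 := Set.indicator_nonneg (fun _ _ ↦ hc) (s := (↑(range (2 * r)) : Set ℕ)) n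
  have h2 := Set.indicator_nonneg (fun _ _ ↦ by positivity)
    (f := fun _ : ℕ ↦ 2 * (r : ℝ) / y) (s := ↑(largePrimeFactors H y)) n
  unfold tailMajorant
  positivity

lemma abs_singularFactor_sub_one_le_tailMajorant {p ν r H : ℕ} (hp : p.Prime) (hH : H ≠ 0)
    {y c : ℝ} (hy : 0 < y) (hyp : y < p) (hc : y < 2 * r → 2 ^ r ≤ c) (hνr : ν ≤ r)
    (hνp : ν ≤ p) (hν : ¬ p ∣ H → ν = r) :
    |singularFactor p ν r - 1| ≤ tailMajorant r H y c p := by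
  have hp2 : (2 : ℝ) ≤ p := by exact_mod_cast hp.two_le
  have hdiv : 0 ≤ (↑(largePrimeFactors H y) : Set ℕ).indicator (fun _ ↦ 2 * (r : ℝ) / y) p :=
    Set.indicator_nonneg (fun _ _ ↦ by positivity) _
  have hrest : 0 ≤ (r : ℝ) ^ 2 / √y * (p : ℝ) ^ (-(3 / 2) : ℝ) := by positivity
  unfold tailMajorant
  by_cases hsmall : p < 2 * r
  · rw [Set.indicator_of_mem (by simpa using hsmall)]
    have := abs_singularFactor_sub_one_le_two_pow (r := r) hp2 (Nat.cast_nonneg ν)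
      (by exact_mod_cast hνp)
    linarith [hc (hyp.trans (by exact_mod_cast hsmall))]
  rw [Set.indicator_of_notMem (by simpa using hsmall), zero_add]
  have hrp : 2 * (r : ℝ) ≤ p := by exact_mod_cast not_lt.mp hsmall
  by_cases hdvd : p ∣ H
  · rw [Set.indicator_of_mem (by simp [largePrimeFactors, hp, hdvd, hH, hyp])]
    calc |singularFactor p ν r - 1| ≤ 2 * r / p :=
          abs_singularFactor_sub_one_le_of_le hp2 hrp (Nat.cast_nonneg ν) (by exact_mod_cast hνr)
      _ ≤ 2 * r / y := div_le_div_of_nonneg_left (by positivity) hy hyp.le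
      _ ≤ _ := le_add_of_nonneg_right hrest
  · rw [hν hdvd]
    calc |singularFactor p r r - 1| ≤ r ^ 2 / p ^ 2 :=
          abs_singularFactor_self_sub_one_le hp2 (by linarith)
      _ ≤ r ^ 2 / √y * (p : ℝ) ^ (-(3 / 2) : ℝ) := by
          rw [div_eq_mul_inv, div_eq_mul_inv, mul_assoc]
          gcongr
          exact inv_sq_le_inv_sqrt_mul_rpow hy hyp.le
      _ ≤ _ := le_add_of_nonneg_left hdiv

noncomputable def tailConstant (r : ℕ) : ℝ :=
  2 * r * 2 ^ r * Real.log (4 * r) + 16 * r ^ 3 + 4 * r ^ 2 * ∑' n : ℕ, (n : ℝ) ^ (-(3 / 2) : ℝ)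

lemma tailConstant_nonneg (r : ℕ) : 0 ≤ tailConstant r := by
  have := log_four_mul_nonneg r
  have : 0 ≤ ∑' n : ℕ, (n : ℝ) ^ (-(3 / 2) : ℝ) := tsum_nonneg fun n ↦ by positivity
  unfold tailConstant
  positivity

lemma tsum_tailMajorant_le {r H : ℕ} (hH : H ≠ 0) {y L : ℝ} (hy : 0 < y) (hL : 0 < L)
    (hLy : L ≤ 4 * Real.log y) (hLy' : L ≤ 4 * √y) (hHy : Real.log H ≤ 2 * r ^ 2 * y) :
    ∑' n, tailMajorant r H y (2 ^ r * Real.log (4 * r) / L) n ≤ tailConstant r / L := by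
  rw [(hasSum_tailMajorant ..).tsum_eq, tailConstant, add_div, add_div]
  gcongr ?_ + ?_ + ?_
  · exact le_of_eq (by ring)
  · have hk := card_largePrimeFactors_mul_log_le hH hy
    set k : ℝ := (#(largePrimeFactors H y) : ℝ)
    have hkL : k * L ≤ 8 * r ^ 2 * y := by nlinarith [show (0 : ℝ) ≤ k by positivity]
    rw [mul_div_assoc', div_le_div_iff₀ hy hL]
    nlinarith [mul_le_mul_of_nonneg_left hkL (by positivity : (0 : ℝ) ≤ 2 * r)]
  · set Z := ∑' n : ℕ, (n : ℝ) ^ (-(3 / 2) : ℝ)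
    have hZ : 0 ≤ Z := tsum_nonneg fun n ↦ by positivity
    rw [div_mul_eq_mul_div, div_le_div_iff₀ (Real.sqrt_pos.mpr hy) hL]
    nlinarith [mul_le_mul_of_nonneg_left hLy' (by positivity : (0 : ℝ) ≤ r ^ 2 * Z)]

lemma summable_and_tsum_abs_singularFactor_sub_one_le {r h : ℕ} (h16 : 16 ≤ h) {a : Fin r → ℤ}
    (ha : ∀ i, a i ∈ Icc (0 : ℤ) h) (hinj : Function.Injective a) :
    Summable (fun p : {p : Nat.Primes // Real.log h / 2 < ((p : ℕ) : ℝ)} ↦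
        |singularFactor (p : ℕ) (nu (p : ℕ) a) r - 1|) ∧
      ∑' p : {p : Nat.Primes // Real.log h / 2 < ((p : ℕ) : ℝ)},
        |singularFactor (p : ℕ) (nu (p : ℕ) a) r - 1| ≤ tailConstant r / Real.log (Real.log h) := by
  set x := Real.log h
  have hx : Real.exp 1 ≤ x := exp_one_le_log_of_sixteen_le (by exact_mod_cast h16)
  have hx0 : 0 < x := (Real.exp_pos 1).trans_le hx
  have hL : 1 ≤ Real.log x := (Real.le_log_iff_exp_le hx0).mpr hx
  set H := (diffProduct a).natAbs
  have hH : H ≠ 0 := Int.natAbs_ne_zero.mpr (diffProduct_ne_zero hinj)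
  set c := 2 ^ r * Real.log (4 * r) / Real.log x
  have hc0 : 0 ≤ c := by have := log_four_mul_nonneg r; positivity
  have hc : x / 2 < 2 * r → 2 ^ r ≤ c := fun hsmall ↦ by
    have : Real.log x ≤ Real.log (4 * r) := Real.log_le_log hx0 (by linarith)
    rw [le_div_iff₀ (by linarith)]
    exact mul_le_mul_of_nonneg_left this (by positivity)
  have hmaj (p : {p : Nat.Primes // x / 2 < ((p : ℕ) : ℝ)}) :
      |singularFactor (p : ℕ) (nu (p : ℕ) a) r - 1| ≤ tailMajorant r H (x / 2) c p :=
    haveI := NeZero.of_pos p.1.2.pos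
    abs_singularFactor_sub_one_le_tailMajorant p.1.2 hH (by positivity) p.2 hc (nu_le a _)
      (nu_le_self a _) fun hp ↦ nu_eq_of_not_dvd (mt Int.ofNat_dvd_left.mp hp)
  have hsum := (hasSum_tailMajorant r H (x / 2) c).summable
  have hι : Function.Injective fun p : {p : Nat.Primes // x / 2 < ((p : ℕ) : ℝ)} ↦ (p : ℕ) :=
    fun p q hpq ↦ Subtype.ext (Subtype.ext hpq)
  have hsumι := hsum.comp_injective hι
  have hsumF := hsumι.of_nonneg_of_le (fun _ ↦ abs_nonneg _) hmaj
  refine ⟨hsumF, ?_⟩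
  calc _ ≤ ∑' p : {p : Nat.Primes // x / 2 < ((p : ℕ) : ℝ)}, tailMajorant r H (x / 2) c p :=
        hsumF.tsum_le_tsum hmaj hsumι
    _ ≤ ∑' n, tailMajorant r H (x / 2) c n :=
        tsum_comp_le_tsum_of_inj hsum (tailMajorant_nonneg (by positivity) hc0) hι
    _ ≤ tailConstant r / Real.log x :=
        tsum_tailMajorant_le hH (by positivity) (by positivity)
          (by linarith [log_le_four_mul_log_half hx])
          (by linarith [log_le_four_mul_sqrt_half hx0.le])
          (by linarith [log_natAbs_diffProduct_le (by omega) ha])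

/-- With `y = (1/2) log h`, for distinct integers `0 ≤ h₁,…,h_r ≤ h`, the tail
product `∏_{p > y} (1 - ν_p(h)/p)(1 - 1/p)^{-r}` is `1 + O(1/log log h)`,
uniformly in the tuple. -/
theorem tail_product_estimate (r : ℕ) :
    ∃ C : ℝ, 0 < C ∧ ∀ h : ℕ, 16 ≤ h → ∀ a : Fin r → ℤ,
      (∀ i, a i ∈ Finset.Icc (0:ℤ) (h:ℤ)) →
      (∀ i j : Fin r, i ≠ j → a i ≠ a j) →
      |(∏' p : {p : Nat.Primes // Real.log h / 2 < ((p : ℕ) : ℝ)},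
          ((1 - (nu (p : ℕ) a : ℝ) / ((p : ℕ) : ℝ)) * ((1 - 1 / ((p : ℕ) : ℝ))⁻¹) ^ r))
        - 1| ≤ C / Real.log (Real.log h) := by
  set K := tailConstant r
  have hK := tailConstant_nonneg r
  refine ⟨K * Real.exp K + 1, by positivity, fun h h16 a ha hdist ↦ ?_⟩
  have hinj : Function.Injective a := fun i j hij ↦ by_contra fun hne ↦ hdist i j hne hij
  obtain ⟨hsum, hS⟩ := summable_and_tsum_abs_singularFactor_sub_one_le h16 ha hinj
  have hL : 1 ≤ Real.log (Real.log h) := by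
    have hx := exp_one_le_log_of_sixteen_le (x := h) (by exact_mod_cast h16)
    exact (Real.le_log_iff_exp_le ((Real.exp_pos 1).trans_le hx)).mpr hx
  set S := ∑' p : {p : Nat.Primes // Real.log h / 2 < ((p : ℕ) : ℝ)},
    |singularFactor (p : ℕ) (nu (p : ℕ) a) r - 1|
  have hS0 : 0 ≤ S := tsum_nonneg fun _ ↦ abs_nonneg _
  calc _ = ‖∏' p : {p : Nat.Primes // Real.log h / 2 < ((p : ℕ) : ℝ)},
        (1 + (singularFactor (p : ℕ) (nu (p : ℕ) a) r - 1)) - 1‖ := by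
        simp only [add_sub_cancel, Real.norm_eq_abs, singularFactor]
    _ ≤ Real.exp S - 1 := norm_tprod_one_add_sub_one_le hsum
    _ ≤ S * Real.exp S := exp_sub_one_le_mul_exp S
    _ ≤ K / Real.log (Real.log h) * Real.exp K := by
        gcongr
        exact hS.trans (div_le_self hK hL)
    _ ≤ (K * Real.exp K + 1) / Real.log (Real.log h) := by
        rw [div_mul_eq_mul_div]
        gcongr
        linarith
end

section
/- For a squarefree positive integer P and integers h₁,…,h_r, the sum over all tuples 0 ≤ h₁,…,h_r ≤ h of ∏_{p|P}(1 - ν_p(h)/p) equals h^r ∏_{p|P}(1 - 1/p)^r + O(h^{r-1} P · ∏_{p|P}(1 + 1/p)^r), with implied constant depending only on r. -/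
/-!
For each prime `p ∣ P`, `p - ν_p(a)` counts the residues `x` mod `p` with `aᵢ ≢ x` for all `i`.
Multiplying over `p`, the summand is `1/P` times the number of residue tuples
`g ∈ ∏_{p ∣ P} ℤ/p` avoided by every `aᵢ`, and exchanging the two sums turns the left-hand side
into `(1/P) ∑_g x_g ^ r`, where `x_g` counts the `t ∈ [0, h]` with `t ≢ g_p (mod p)` for all `p`.
By the Chinese remainder theorem this condition is `P`-periodic in `t` with density
`∏_{p ∣ P} (1 - 1/p)`, so `x_g = h ∏ (1 - 1/p) + O(P)`; since there are exactly `P` tuples `g`,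
the mean value theorem bound `|x^r - y^r| ≤ r M^(r-1) |x - y|` finishes the proof.
-/

open Finset

section Periodic

variable {n : ℕ} [NeZero n] (Q : ZMod n → Prop) [DecidablePred Q]

theorem card_filter_Ico_add_eq (a : ℤ) :
    #{t ∈ Ico a (a + (n : ℤ)) | Q ((t : ℤ) : ZMod n)} = #{x | Q x} := by
  refine card_nbij (fun t : ℤ => (t : ZMod n)) (fun t ht => by simpa using (mem_filter.1 ht).2)
    (fun s hs t ht hst => ?_) (fun x hx => ?_)
  · simp only [coe_filter, mem_Ico, Set.mem_ofPred_eq] at hs ht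
    have hdvd : (n : ℤ) ∣ t - s := (ZMod.intCast_eq_intCast_iff_dvd_sub _ _ _).1 hst
    have := Int.eq_zero_of_abs_lt_dvd hdvd (abs_sub_lt_iff.2 ⟨by omega, by omega⟩)
    omega
  · refine ⟨a + ((x.val : ℤ) - a) % n, ?_, by simp⟩
    have h0 := Int.emod_nonneg ((x.val : ℤ) - a) (by exact_mod_cast NeZero.ne n : (n : ℤ) ≠ 0)
    have h1 := Int.emod_lt_of_pos ((x.val : ℤ) - a) (by exact_mod_cast NeZero.pos n : (0 : ℤ) < n)
    simp only [coe_filter, mem_Ico, Set.mem_ofPred_eq]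
    exact ⟨⟨by omega, by omega⟩, by simpa using (mem_filter.1 hx).2⟩

theorem card_filter_Ico_add_mul_eq (a : ℤ) (k : ℕ) :
    #{t ∈ Ico a (a + (k * n : ℕ)) | Q ((t : ℤ) : ZMod n)} = k * #{x | Q x} := by
  induction k with
  | zero => simp
  | succ k ih =>
    have hsplit : Ico a (a + ((k + 1) * n : ℕ)) =
        Ico a (a + (k * n : ℕ)) ∪ Ico (a + (k * n : ℕ)) (a + (k * n : ℕ) + n) := by
      rw [Ico_union_Ico_eq_Ico (by omega) (by omega)]
      push_cast
      ring_nf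
    rw [hsplit, filter_union, card_union_of_disjoint
      (disjoint_filter_filter (Ico_disjoint_Ico_consecutive _ _ _)), ih, card_filter_Ico_add_eq]
    ring

theorem abs_card_filter_Ico_sub_le (a : ℤ) (L : ℕ) :
    |(#{t ∈ Ico a (a + (L : ℤ)) | Q ((t : ℤ) : ZMod n)} : ℝ) - L * #{x | Q x} / n| ≤
      #{x | Q x} := by
  set q := L / n
  have hL : q * n ≤ L ∧ L ≤ (q + 1) * n :=
    ⟨Nat.div_mul_le_self L n, (Nat.lt_div_mul_add (NeZero.pos n)).le.trans_eq (by ring)⟩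
  have count_mono : ∀ m m' : ℕ, m ≤ m' → #{t ∈ Ico a (a + (m : ℤ)) | Q ((t : ℤ) : ZMod n)} ≤
      #{t ∈ Ico a (a + (m' : ℤ)) | Q ((t : ℤ) : ZMod n)} :=
    fun m m' hm => card_le_card (filter_subset_filter _ (Ico_subset_Ico_right (by omega)))
  have hlo := count_mono _ _ hL.1
  have hhi := count_mono _ _ hL.2
  rw [card_filter_Ico_add_mul_eq] at hlo hhi
  have hlo' : (q : ℝ) * #{x | Q x} ≤ #{t ∈ Ico a (a + (L : ℤ)) | Q ((t : ℤ) : ZMod n)} := by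
    exact_mod_cast hlo
  have hhi' : (#{t ∈ Ico a (a + (L : ℤ)) | Q ((t : ℤ) : ZMod n)} : ℝ) ≤ (q + 1) * #{x | Q x} := by
    exact_mod_cast hhi
  have hn : (0 : ℝ) < n := by exact_mod_cast NeZero.pos n
  have hL' : (q : ℝ) * n ≤ L ∧ (L : ℝ) ≤ (q + 1) * n := by exact_mod_cast hL
  have hc : (0 : ℝ) ≤ #{x | Q x} := Nat.cast_nonneg _
  have hmean : (q : ℝ) * #{x | Q x} ≤ L * #{x | Q x} / n ∧
      (L : ℝ) * #{x | Q x} / n ≤ (q + 1) * #{x | Q x} := by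
    constructor
    · rw [le_div_iff₀ hn]; nlinarith
    · rw [div_le_iff₀ hn]; nlinarith
  rw [abs_le]
  constructor <;> linarith [hmean.1, hmean.2]

end Periodic

theorem sum_card_filter_forall {ι α β : Type*} [Fintype ι] [DecidableEq ι] [Fintype β]
    (S : Finset α) (R : α → β → Prop) [∀ t b, Decidable (R t b)] :
    ∑ a ∈ Fintype.piFinset fun _ : ι => S, #{b | ∀ i, R (a i) b} =
      ∑ b, #{t ∈ S | R t b} ^ Fintype.card ι := by
  calc ∑ a ∈ Fintype.piFinset fun _ : ι => S, #{b | ∀ i, R (a i) b}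
      = ∑ b, #{a ∈ Fintype.piFinset fun _ : ι => S | ∀ i, R (a i) b} := by
        simp only [card_filter]
        exact sum_comm
    _ = ∑ b, #{t ∈ S | R t b} ^ Fintype.card ι := by
        refine sum_congr rfl fun b _ => ?_
        have : ({a ∈ Fintype.piFinset fun _ : ι => S | ∀ i, R (a i) b} : Finset _) =
            Fintype.piFinset fun _ => {t ∈ S | R t b} := by
          ext
          simp [forall_and]
        rw [this, Fintype.card_piFinset, prod_const, card_univ]

theorem abs_pow_sub_pow_le_of_le {x y M : ℝ} (hx0 : 0 ≤ x) (hxM : x ≤ M) (hy0 : 0 ≤ y)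
    (hyM : y ≤ M) (r : ℕ) : |x ^ r - y ^ r| ≤ |x - y| * r * M ^ (r - 1) := by
  refine (abs_pow_sub_pow_le x y r).trans ?_
  rw [abs_of_nonneg hx0, abs_of_nonneg hy0]
  gcongr
  exact max_le hxM hyM

theorem prod_one_sub_one_div_mem_Icc (s : Finset ℕ) :
    ∏ p ∈ s, (1 - 1 / (p : ℝ)) ∈ Set.Icc 0 1 := by
  have hfactor : ∀ p : ℕ, 0 ≤ 1 - 1 / (p : ℝ) ∧ 1 - 1 / (p : ℝ) ≤ 1 := fun p => by
    rw [one_div]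
    exact ⟨sub_nonneg.2 (Nat.cast_inv_le_one p), sub_le_self _ (by positivity)⟩
  exact ⟨prod_nonneg fun p _ => (hfactor p).1,
    prod_le_one (fun p _ => (hfactor p).1) fun p _ => (hfactor p).2⟩

theorem card_filter_forall_ne_eq_sub_nu (p : ℕ) [NeZero p] {r : ℕ} (a : Fin r → ℤ) :
    #{x : ZMod p | ∀ i, (a i : ZMod p) ≠ x} = p - nu p a := by
  have : ({x : ZMod p | ∀ i, (a i : ZMod p) ≠ x} : Finset _) =
      univ \ univ.image fun i => (a i : ZMod p) := by
    ext
    simp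
  rw [this, card_sdiff_of_subset (subset_univ _), card_univ, ZMod.card, nu]

section Squarefree

variable {P : ℕ}

instance neZero_of_mem_primeFactors (p : P.primeFactors) : NeZero (p : ℕ) :=
  ⟨(Nat.prime_of_mem_primeFactors p.2).ne_zero⟩

theorem natCast_eq_prod_primeFactors (hP : Squarefree P) :
    (P : ℝ) = ∏ p : P.primeFactors, (p : ℝ) := by
  rw [prod_coe_sort P.primeFactors (fun p => (p : ℝ)), ← Nat.cast_prod,
    Nat.prod_primeFactors_of_squarefree hP]

theorem prod_one_sub_nu_div_eq (hP : Squarefree P) {r : ℕ} (a : Fin r → ℤ) :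
    ∏ p ∈ P.primeFactors, (1 - (nu p a : ℝ) / p) =
      #{g : Π p : P.primeFactors, ZMod p | ∀ i (p : P.primeFactors), (a i : ZMod p) ≠ g p} / P := by
  have hfilter :
      ({g : Π p : P.primeFactors, ZMod p | ∀ i (p : P.primeFactors), (a i : ZMod p) ≠ g p} :
        Finset _) = Fintype.piFinset fun p : P.primeFactors => {x | ∀ i, (a i : ZMod p) ≠ x} := by
    ext
    simp [forall_comm (α := Fin r)]
  rw [hfilter, Fintype.card_piFinset, natCast_eq_prod_primeFactors hP,
    ← prod_coe_sort P.primeFactors, Nat.cast_prod, ← prod_div_distrib]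
  refine prod_congr rfl fun p _ => ?_
  have hnu : nu p a ≤ p := (card_le_univ _).trans (ZMod.card p).le
  have hp : (p : ℝ) ≠ 0 := Nat.cast_ne_zero.2 (NeZero.ne _)
  rw [card_filter_forall_ne_eq_sub_nu, Nat.cast_sub hnu]
  field_simp

theorem sum_prod_one_sub_nu_div_eq (hP : Squarefree P) {r : ℕ} (S : Finset ℤ) :
    ∑ a ∈ Fintype.piFinset (fun _ : Fin r => S), ∏ p ∈ P.primeFactors, (1 - (nu p a : ℝ) / p) =
      ∑ g : Π p : P.primeFactors, ZMod p,
        (#{t ∈ S | ∀ p : P.primeFactors, (t : ZMod p) ≠ g p} : ℝ) ^ r / P := by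
  simp_rw [prod_one_sub_nu_div_eq hP, ← sum_div]
  have := sum_card_filter_forall (ι := Fin r) S
    fun t (g : Π p : P.primeFactors, ZMod p) => ∀ p : P.primeFactors, (t : ZMod p) ≠ g p
  rw [Fintype.card_fin] at this
  exact_mod_cast congrArg (fun n : ℕ => (n : ℝ) / P) this

noncomputable def primeFactorsCRT (hP : Squarefree P) : ZMod P ≃+* Π p : P.primeFactors, ZMod p :=
  (ZMod.ringEquivCongr ((prod_coe_sort P.primeFactors fun p => p).trans
      (Nat.prod_primeFactors_of_squarefree hP)).symm).trans
    (ZMod.prodEquivPi (fun p : P.primeFactors => (p : ℕ)) fun p q hpq =>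
      (Nat.coprime_primes (Nat.prime_of_mem_primeFactors p.2)
        (Nat.prime_of_mem_primeFactors q.2)).2 (Subtype.coe_injective.ne hpq))

theorem primeFactorsCRT_intCast (hP : Squarefree P) (t : ℤ) (p : P.primeFactors) :
    primeFactorsCRT hP t p = t := by
  rw [map_intCast]
  rfl

theorem card_pi_zmod_primeFactors (hP : Squarefree P) :
    Fintype.card (Π p : P.primeFactors, ZMod p) = P := by
  have : NeZero P := ⟨hP.ne_zero⟩
  rw [← Fintype.card_congr (primeFactorsCRT hP).toEquiv, ZMod.card]

theorem card_filter_primeFactorsCRT_ne_div [NeZero P] (hP : Squarefree P)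
    (g : Π p : P.primeFactors, ZMod p) :
    (#{c : ZMod P | ∀ p, primeFactorsCRT hP c p ≠ g p} : ℝ) / P =
      ∏ p ∈ P.primeFactors, (1 - 1 / (p : ℝ)) := by
  have hcard : #{c : ZMod P | ∀ p, primeFactorsCRT hP c p ≠ g p} =
      #(Fintype.piFinset fun p => {g p}ᶜ) :=
    card_equiv (primeFactorsCRT hP).toEquiv (by simp [Fintype.mem_piFinset])
  rw [hcard, Fintype.card_piFinset, natCast_eq_prod_primeFactors hP,
    ← prod_coe_sort P.primeFactors, Nat.cast_prod, ← prod_div_distrib]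
  refine prod_congr rfl fun p _ => ?_
  have hp : (p : ℝ) ≠ 0 := Nat.cast_ne_zero.2 (NeZero.ne _)
  rw [card_compl, card_singleton, ZMod.card, Nat.cast_sub NeZero.one_le, Nat.cast_one]
  field_simp

theorem abs_card_avoiding_sub_le (hP : Squarefree P) (g : Π p : P.primeFactors, ZMod p)
    (a : ℤ) (L : ℕ) :
    |(#{t ∈ Ico a (a + (L : ℤ)) | ∀ p : P.primeFactors, (t : ZMod p) ≠ g p} : ℝ) -
      L * ∏ p ∈ P.primeFactors, (1 - 1 / (p : ℝ))| ≤ P := by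
  have : NeZero P := ⟨hP.ne_zero⟩
  have key := abs_card_filter_Ico_sub_le (fun c : ZMod P => ∀ p, primeFactorsCRT hP c p ≠ g p) a L
  simp only [primeFactorsCRT_intCast] at key
  rw [mul_div_assoc, card_filter_primeFactorsCRT_ne_div hP g] at key
  exact key.trans (by exact_mod_cast (card_filter_le _ _).trans (ZMod.card P).le)

theorem abs_card_avoiding_pow_sub_le (hP : Squarefree P) (g : Π p : P.primeFactors, ZMod p)
    {h : ℕ} (hh : 1 ≤ h) (r : ℕ) :
    |(#{t ∈ Icc (0 : ℤ) h | ∀ p : P.primeFactors, (t : ZMod p) ≠ g p} : ℝ) ^ r -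
      (h * ∏ p ∈ P.primeFactors, (1 - 1 / (p : ℝ))) ^ r| ≤
        2 * (r + 1) * 2 ^ r * h ^ (r - 1) * P := by
  have hIcc : Icc (0 : ℤ) h = Ico 0 (0 + ((h + 1 : ℕ) : ℤ)) := by
    ext
    simp only [mem_Icc, mem_Ico]
    omega
  have hcount := abs_card_avoiding_sub_le hP g 0 (h + 1)
  have hxh : (#{t ∈ Icc (0 : ℤ) h | ∀ p : P.primeFactors, (t : ZMod p) ≠ g p} : ℝ) ≤ h + 1 := by
    have : #(Icc (0 : ℤ) h) = h + 1 := by simp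
    exact_mod_cast (card_filter_le _ _).trans this.le
  rw [← hIcc, Nat.cast_succ] at hcount
  set x : ℝ := ((#{t ∈ Icc (0 : ℤ) h | ∀ p : P.primeFactors, (t : ZMod p) ≠ g p} : ℕ) : ℝ)
  obtain ⟨hδ0, hδ1⟩ := prod_one_sub_one_div_mem_Icc P.primeFactors
  set δ := ∏ p ∈ P.primeFactors, (1 - 1 / (p : ℝ))
  have hP1 : (1 : ℝ) ≤ P := by exact_mod_cast Nat.one_le_iff_ne_zero.2 hP.ne_zero
  have hh1 : (1 : ℝ) ≤ h := by exact_mod_cast hh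
  have hdiff : |x - h * δ| ≤ 2 * P := by
    rw [abs_le] at hcount ⊢
    constructor <;> nlinarith
  calc |x ^ r - (h * δ) ^ r| ≤ |x - h * δ| * r * (2 * h) ^ (r - 1) :=
        abs_pow_sub_pow_le_of_le (Nat.cast_nonneg _) (by linarith) (by positivity) (by nlinarith) r
    _ ≤ 2 * P * r * (2 * h) ^ (r - 1) := by gcongr
    _ = 2 * r * 2 ^ (r - 1) * h ^ (r - 1) * P := by ring
    _ ≤ 2 * (r + 1) * 2 ^ r * h ^ (r - 1) * P := by
      gcongr
      · linarith
      · exact one_le_two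
      · omega

end Squarefree

theorem sum_over_all_tuples_general (r : ℕ) :
    ∃ C : ℝ, 0 < C ∧ ∀ P : ℕ, 0 < P → Squarefree P → ∀ h : ℕ, 1 ≤ h →
      |(∑ a ∈ Fintype.piFinset (fun _ : Fin r => Finset.Icc (0:ℤ) (h:ℤ)),
          ∏ p ∈ P.primeFactors, (1 - (nu p a : ℝ) / (p : ℝ)))
        - (h : ℝ) ^ r * ∏ p ∈ P.primeFactors, (1 - 1 / (p : ℝ)) ^ r|
      ≤ C * (h : ℝ) ^ (r - 1) * P * ∏ p ∈ P.primeFactors, (1 + 1 / (p : ℝ)) ^ r := by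
  refine ⟨2 * (r + 1) * 2 ^ r, by positivity, fun P hP0 hP h hh => ?_⟩
  have hP0' : (0 : ℝ) < P := by exact_mod_cast hP0
  set E : ℝ := 2 * (r + 1) * 2 ^ r * h ^ (r - 1) * P
  have sum_const_div (c : ℝ) : ∑ _g : Π p : P.primeFactors, ZMod p, c / P = c := by
    rw [sum_const, card_univ, card_pi_zmod_primeFactors hP, nsmul_eq_mul,
      mul_div_cancel₀ _ hP0'.ne']
  rw [sum_prod_one_sub_nu_div_eq hP, prod_pow P.primeFactors r fun p => 1 - 1 / (p : ℝ),
    ← mul_pow, ← sum_const_div (_ ^ r), ← sum_sub_distrib]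
  calc _ ≤ ∑ g : Π p : P.primeFactors, ZMod p, E / P := by
        refine (abs_sum_le_sum_abs _ _).trans (sum_le_sum fun g _ => ?_)
        rw [← sub_div, abs_div, abs_of_pos hP0']
        gcongr
        exact abs_card_avoiding_pow_sub_le hP g hh r
    _ = E := sum_const_div E
    _ ≤ E * ∏ p ∈ P.primeFactors, (1 + 1 / (p : ℝ)) ^ r :=
        le_mul_of_one_le_right (by positivity) (one_le_prod fun p _ => one_le_pow₀ (by simp))

/-- For squarefree `P` the sum over all tuples `0 ≤ h₁,…,h_r ≤ h` of
`∏_{p|P}(1 - ν_p(h)/p)` equals `h^r ∏_{p|P}(1-1/p)^r` up to an error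
`O(h^{r-1} P ∏_{p|P}(1+1/p)^r)`, with constant depending only on `r`. -/
theorem sum_over_all_tuples (r : ℕ) (hr : 1 ≤ r) :
    ∃ C : ℝ, 0 < C ∧ ∀ P : ℕ, 0 < P → Squarefree P → ∀ h : ℕ, 1 ≤ h →
      |(∑ a ∈ Fintype.piFinset (fun _ : Fin r => Finset.Icc (0:ℤ) (h:ℤ)),
          ∏ p ∈ P.primeFactors, (1 - (nu p a : ℝ) / (p : ℝ)))
        - (h : ℝ) ^ r * ∏ p ∈ P.primeFactors, (1 - 1 / (p : ℝ)) ^ r|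
      ≤ C * (h : ℝ) ^ (r - 1) * P * ∏ p ∈ P.primeFactors, (1 + 1 / (p : ℝ)) ^ r :=
  sum_over_all_tuples_general r
end
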